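/- arXiv:2207.13319 — 4 statements merged into one kernel-verified Lean document; each statement's English description precedes it below -/
import Mathlib

section
/- The coefficients (α, β) minimizing E[(α + βᵀX_S − Y_S)²] over α ∈ ℝ, β ∈ ℝ^d are given by β_Pool = E[W_S]⁻¹(cov[α_S, μ_S] + E[W_S β_S]) and α_Pool = E[Y_S] − β_Poolᵀ μ̄, where W_s = Σ_s + μ_s μ_sᵀ − μ̄ μ_sᵀ and μ̄ = E[μ_S]. -/
/-!
`(α_Pool, β_Pool)` are the population least-squares coefficients of `Y_S` on `X_S`. If the
residual `R = α + βᵀX_S − Y_S` satisfies the normal equations `E[R] = 0` and `E[R X_S] = 0`,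
then `E[(R + D)²] = E[R²] + E[D²]` for every `D` affine in `X_S`, so `(α, β)` is a minimizer.
With `α = E[Y_S] − βᵀE[X_S]` the normal equations reduce to `Cov(X_S) β = Cov(X_S, Y_S)`.
Conditioning on the regime, and using that `ε_s` is orthogonal to `1` and to `X_s`, gives
`Cov(X_S) = E[W_S]` and `Cov(X_S, Y_S) = cov[α_S, μ_S] + E[W_S β_S]`, which `β_Pool` solves.
-/

open MeasureTheory Matrix

namespace MeasureTheory

variable {Ω ι : Type*} [MeasurableSpace Ω] {ν : Measure Ω}

section DotProduct

variable [Fintype ι]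

lemma integrable_dotProduct {F : Ω → ι → ℝ} (hF : ∀ j, Integrable (fun ω => F ω j) ν)
    (b : ι → ℝ) : Integrable (fun ω => b ⬝ᵥ F ω) ν :=
  integrable_finsetSum _ fun j _ => (hF j).const_mul (b j)

lemma integral_dotProduct {F : Ω → ι → ℝ} (hF : ∀ j, Integrable (fun ω => F ω j) ν)
    (b : ι → ℝ) : ∫ ω, b ⬝ᵥ F ω ∂ν = b ⬝ᵥ fun j => ∫ ω, F ω j ∂ν := by
  simp only [dotProduct]
  rw [integral_finsetSum _ fun j _ => (hF j).const_mul (b j)]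
  simp only [integral_const_mul]

lemma integrable_const_add_dotProduct [IsFiniteMeasure ν] {X : Ω → ι → ℝ}
    (hX : ∀ j, Integrable (fun ω => X ω j) ν) (a : ℝ) (b : ι → ℝ) :
    Integrable (fun ω => a + b ⬝ᵥ X ω) ν :=
  (integrable_const a).add (integrable_dotProduct hX b)

lemma memLp_const_add_dotProduct [IsFiniteMeasure ν] {X : Ω → ι → ℝ} {p : ENNReal}
    (hX : ∀ j, MemLp (fun ω => X ω j) p ν) (a : ℝ) (b : ι → ℝ) :
    MemLp (fun ω => a + b ⬝ᵥ X ω) p ν :=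
  (memLp_const a).add (memLp_finsetSum _ fun j _ => (hX j).const_mul (b j))

lemma integral_const_add_dotProduct [IsFiniteMeasure ν] {X : Ω → ι → ℝ}
    (hX : ∀ j, Integrable (fun ω => X ω j) ν) (a : ℝ) (b : ι → ℝ) :
    ∫ ω, a + b ⬝ᵥ X ω ∂ν = ν.real Set.univ * a + b ⬝ᵥ fun j => ∫ ω, X ω j ∂ν := by
  rw [integral_add (integrable_const a) (integrable_dotProduct hX b),
    integral_const, integral_dotProduct hX, smul_eq_mul]

lemma integral_mul_const_add_dotProduct {f : Ω → ℝ} {X : Ω → ι → ℝ} (hf : Integrable f ν)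
    (hfX : ∀ j, Integrable (fun ω => f ω * X ω j) ν) (a : ℝ) (b : ι → ℝ) :
    ∫ ω, f ω * (a + b ⬝ᵥ X ω) ∂ν = a * ∫ ω, f ω ∂ν + b ⬝ᵥ fun j => ∫ ω, f ω * X ω j ∂ν := by
  have hdot : ∀ ω, f ω * (b ⬝ᵥ X ω) = b ⬝ᵥ fun j => f ω * X ω j := fun ω => by
    simp only [dotProduct, Finset.mul_sum]; ring_nf
  simp_rw [mul_add, hdot]
  rw [integral_add (hf.const_mul a |>.congr (ae_of_all _ fun ω => mul_comm _ _))
    (integrable_dotProduct hfX b), integral_dotProduct hfX]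
  simp_rw [mul_comm (f _) a, integral_const_mul]

end DotProduct

lemma integral_sq_le_integral_add_sq {R D : Ω → ℝ} (hR : MemLp R 2 ν) (hD : MemLp D 2 ν)
    (hRD : ∫ ω, R ω * D ω ∂ν = 0) : ∫ ω, R ω ^ 2 ∂ν ≤ ∫ ω, (R ω + D ω) ^ 2 ∂ν := by
  have hR2 : Integrable (fun ω => R ω ^ 2) ν := hR.integrable_sq
  have hRD' : Integrable (fun ω => 2 * (R ω * D ω)) ν := (hR.integrable_mul hD).const_mul 2
  calc ∫ ω, R ω ^ 2 ∂ν = ∫ ω, R ω ^ 2 + 2 * (R ω * D ω) ∂ν := by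
        rw [integral_add hR2 hRD', integral_const_mul, hRD]; ring
    _ ≤ ∫ ω, (R ω + D ω) ^ 2 ∂ν := by
        refine integral_mono (hR2.add hRD') (hR.add hD).integrable_sq fun ω => ?_
        nlinarith [sq_nonneg (D ω)]

lemma integral_sub_mul_sub [IsFiniteMeasure ν] {f g : Ω → ℝ} (hf : Integrable f ν)
    (hg : Integrable g ν) (hfg : Integrable (fun ω => f ω * g ω) ν) (a b : ℝ) :
    ∫ ω, (f ω - a) * (g ω - b) ∂ν
      = ∫ ω, f ω * g ω ∂ν - a * ∫ ω, g ω ∂ν - b * ∫ ω, f ω ∂ν + ν.real Set.univ * (a * b) := by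
  have hlin : Integrable (fun ω => a * g ω + b * f ω) ν := (hg.const_mul a).add (hf.const_mul b)
  calc ∫ ω, (f ω - a) * (g ω - b) ∂ν
      = ∫ ω, f ω * g ω - (a * g ω + b * f ω) + a * b ∂ν :=
        integral_congr_ae (ae_of_all _ fun ω => by ring)
    _ = _ := by
        have hdiff : Integrable (fun ω => f ω * g ω - (a * g ω + b * f ω)) ν := hfg.sub hlin
        rw [integral_add hdiff (integrable_const _), integral_sub hfg hlin,
          integral_add (hg.const_mul a) (hf.const_mul b), integral_const_mul, integral_const_mul,
          integral_const, smul_eq_mul]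
        ring

section LeastSquares

variable [Fintype ι] {X : Ω → ι → ℝ} {Y : Ω → ℝ}

lemma memLp_two_residual_of_integrable_sq [IsFiniteMeasure ν]
    (hsq : ∀ (a : ℝ) (b : ι → ℝ), Integrable (fun ω => (a + b ⬝ᵥ X ω - Y ω) ^ 2) ν)
    (a : ℝ) (b : ι → ℝ) :
    MemLp (fun ω => a + b ⬝ᵥ X ω - Y ω) 2 ν := by
  have hint : Integrable (fun ω => a + b ⬝ᵥ X ω - Y ω) ν := by
    -- `r = ((r + 1)² - r² - 1) / 2`, and `r + 1` is the residual of `(a + 1, b)`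
    refine (((hsq (a + 1) b).sub (hsq a b)).sub (integrable_const 1)).div_const 2 |>.congr
      (ae_of_all _ fun ω => ?_)
    simp only [Pi.sub_apply]
    ring
  exact (memLp_two_iff_integrable_sq hint.aestronglyMeasurable).2 (hsq a b)

lemma memLp_two_response_of_integrable_sq [IsFiniteMeasure ν]
    (hsq : ∀ (a : ℝ) (b : ι → ℝ), Integrable (fun ω => (a + b ⬝ᵥ X ω - Y ω) ^ 2) ν) :
    MemLp Y 2 ν :=
  (memLp_two_residual_of_integrable_sq hsq 0 0).neg.ae_eq (ae_of_all _ fun ω => by simp)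

lemma memLp_two_coord_of_integrable_sq [IsFiniteMeasure ν]
    (hsq : ∀ (a : ℝ) (b : ι → ℝ), Integrable (fun ω => (a + b ⬝ᵥ X ω - Y ω) ^ 2) ν) (i : ι) :
    MemLp (fun ω => X ω i) 2 ν := by
  classical
  exact ((memLp_two_residual_of_integrable_sq hsq 0 (Pi.single i 1)).sub
    (memLp_two_residual_of_integrable_sq hsq 0 0)).ae_eq (ae_of_all _ fun ω => by simp)

theorem integral_sq_residual_le_of_normal_equations [IsFiniteMeasure ν]
    (hsq : ∀ (a : ℝ) (b : ι → ℝ), Integrable (fun ω => (a + b ⬝ᵥ X ω - Y ω) ^ 2) ν)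
    {α : ℝ} {β : ι → ℝ} (hmean : ∫ ω, α + β ⬝ᵥ X ω - Y ω ∂ν = 0)
    (hnormal : ∀ j, ∫ ω, (α + β ⬝ᵥ X ω - Y ω) * X ω j ∂ν = 0) (a : ℝ) (b : ι → ℝ) :
    ∫ ω, (α + β ⬝ᵥ X ω - Y ω) ^ 2 ∂ν ≤ ∫ ω, (a + b ⬝ᵥ X ω - Y ω) ^ 2 ∂ν := by
  have hX := memLp_two_coord_of_integrable_sq hsq
  have hR := memLp_two_residual_of_integrable_sq hsq α β
  have hD : MemLp (fun ω => (a - α) + (b - β) ⬝ᵥ X ω) 2 ν :=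
    ((memLp_two_residual_of_integrable_sq hsq a b).sub hR).ae_eq (ae_of_all _ fun ω => by
      simp only [Pi.sub_apply, sub_dotProduct]
      ring)
  have horth : ∫ ω, (α + β ⬝ᵥ X ω - Y ω) * ((a - α) + (b - β) ⬝ᵥ X ω) ∂ν = 0 := by
    rw [integral_mul_const_add_dotProduct (hR.integrable one_le_two)
      (fun j => hR.integrable_mul (hX j)), hmean, funext hnormal]
    simp
  calc ∫ ω, (α + β ⬝ᵥ X ω - Y ω) ^ 2 ∂ν
      ≤ ∫ ω, ((α + β ⬝ᵥ X ω - Y ω) + ((a - α) + (b - β) ⬝ᵥ X ω)) ^ 2 ∂ν :=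
        integral_sq_le_integral_add_sq hR hD horth
    _ = ∫ ω, (a + b ⬝ᵥ X ω - Y ω) ^ 2 ∂ν := by
        refine integral_congr_ae (ae_of_all _ fun ω => ?_)
        simp only [sub_dotProduct]
        ring

theorem integral_sq_residual_le_of_moment_equations {P : Measure Ω} [IsProbabilityMeasure P]
    (hsq : ∀ (a : ℝ) (b : ι → ℝ), Integrable (fun ω => (a + b ⬝ᵥ X ω - Y ω) ^ 2) P)
    {m : ι → ℝ} {M : Matrix ι ι ℝ} {c : ι → ℝ} {EY : ℝ}
    (hm : ∀ i, ∫ ω, X ω i ∂P = m i) (hM : ∀ i j, ∫ ω, X ω i * X ω j ∂P = M i j)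
    (hc : ∀ i, ∫ ω, X ω i * Y ω ∂P = c i) (hEY : ∫ ω, Y ω ∂P = EY)
    {α : ℝ} {β : ι → ℝ} (hα : α = EY - β ⬝ᵥ m) (hβ : (M - vecMulVec m m) *ᵥ β = c - EY • m) :
    ∀ (a : ℝ) (b : ι → ℝ),
      ∫ ω, (α + β ⬝ᵥ X ω - Y ω) ^ 2 ∂P ≤ ∫ ω, (a + b ⬝ᵥ X ω - Y ω) ^ 2 ∂P := by
  have hX := memLp_two_coord_of_integrable_sq hsq
  have hY := memLp_two_response_of_integrable_sq hsq
  have hfit := memLp_const_add_dotProduct hX α β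
  refine integral_sq_residual_le_of_normal_equations hsq ?_ fun j => ?_
  · rw [integral_sub (hfit.integrable one_le_two) (hY.integrable one_le_two),
      integral_const_add_dotProduct (fun j => (hX j).integrable one_le_two), funext hm, hEY, hα]
    simp
  · have hβj := congrFun hβ j
    simp only [sub_mulVec, vecMulVec_mulVec, Pi.sub_apply, Pi.smul_apply, op_smul_eq_mul,
      smul_eq_mul] at hβj
    have hXfit : Integrable (fun ω => X ω j * (α + β ⬝ᵥ X ω)) P := (hX j).integrable_mul hfit
    have hXY : Integrable (fun ω => X ω j * Y ω) P := (hX j).integrable_mul hY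
    calc ∫ ω, (α + β ⬝ᵥ X ω - Y ω) * X ω j ∂P
        = ∫ ω, X ω j * (α + β ⬝ᵥ X ω) - X ω j * Y ω ∂P :=
          integral_congr_ae (ae_of_all _ fun ω => by ring)
      _ = α * m j + (M *ᵥ β) j - c j := by
          rw [integral_sub hXfit hXY, integral_mul_const_add_dotProduct
            ((hX j).integrable one_le_two) (fun k => (hX j).integrable_mul (hX k)),
            funext (hM j), hm j, hc j, dotProduct_comm]
          rfl
      _ = 0 := by
          rw [hα, dotProduct_comm β m]
          linarith

end LeastSquares

section Regime

variable [IsFiniteMeasure ν] {X : Ω → ι → ℝ} {μ : ι → ℝ} {q : ℝ}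

lemma integral_mul_eq_of_cov (hq : ν.real Set.univ = q) (hX : ∀ i, MemLp (fun ω => X ω i) 2 ν)
    (hmean : ∀ i, ∫ ω, X ω i ∂ν = q * μ i) {Sig : Matrix ι ι ℝ}
    (hcov : ∀ i j, ∫ ω, (X ω i - μ i) * (X ω j - μ j) ∂ν = q * Sig i j) (i j : ι) :
    ∫ ω, X ω i * X ω j ∂ν = q * (Sig i j + μ i * μ j) := by
  have h := hcov i j
  rw [integral_sub_mul_sub ((hX i).integrable one_le_two) ((hX j).integrable one_le_two)
    ((hX i).integrable_mul (hX j)), hmean, hmean, hq] at h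
  linear_combination h

variable [Fintype ι] {Y ε : Ω → ℝ} {α : ℝ} {β : ι → ℝ}

lemma integral_eq_of_linear_model (hq : ν.real Set.univ = q)
    (hX : ∀ i, Integrable (fun ω => X ω i) ν) (hε : Integrable ε ν)
    (hY : ∀ᵐ ω ∂ν, Y ω = α + β ⬝ᵥ X ω + ε ω) (hmean : ∀ i, ∫ ω, X ω i ∂ν = q * μ i)
    (hε0 : ∫ ω, ε ω ∂ν = 0) :
    ∫ ω, Y ω ∂ν = q * (α + β ⬝ᵥ μ) := by
  rw [integral_congr_ae hY, integral_add (integrable_const_add_dotProduct hX α β) hε,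
    integral_const_add_dotProduct hX, hε0, funext hmean, hq,
    show (fun i => q * μ i) = q • μ from rfl, dotProduct_smul, smul_eq_mul]
  ring

lemma integral_mul_eq_of_linear_model (hq : ν.real Set.univ = q)
    (hX : ∀ i, MemLp (fun ω => X ω i) 2 ν) (hε : MemLp ε 2 ν)
    (hY : ∀ᵐ ω ∂ν, Y ω = α + β ⬝ᵥ X ω + ε ω) (hmean : ∀ i, ∫ ω, X ω i ∂ν = q * μ i)
    {Sig : Matrix ι ι ℝ}
    (hcov : ∀ i j, ∫ ω, (X ω i - μ i) * (X ω j - μ j) ∂ν = q * Sig i j)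
    (hε0 : ∫ ω, ε ω ∂ν = 0) (hXε : ∀ i, ∫ ω, (X ω i - μ i) * ε ω ∂ν = 0) (i : ι) :
    ∫ ω, X ω i * Y ω ∂ν = q * (α * μ i + ((Sig + vecMulVec μ μ) *ᵥ β) i) := by
  have hXε_uncentered : ∫ ω, X ω i * ε ω ∂ν = 0 := by
    simpa [hε0, hXε i, eq_comm] using integral_sub_mul_sub ((hX i).integrable one_le_two)
      (hε.integrable one_le_two) ((hX i).integrable_mul hε) (μ i) 0
  have hfit : Integrable (fun ω => X ω i * (α + β ⬝ᵥ X ω)) ν :=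
    (hX i).integrable_mul (memLp_const_add_dotProduct hX α β)
  have hXε_int : Integrable (fun ω => X ω i * ε ω) ν := (hX i).integrable_mul hε
  rw [integral_congr_ae (hY.mono fun ω hω => by rw [hω, mul_add]), integral_add hfit hXε_int,
    hXε_uncentered, add_zero, integral_mul_const_add_dotProduct ((hX i).integrable one_le_two)
      (fun j => (hX i).integrable_mul (hX j)), hmean,
    funext (integral_mul_eq_of_cov hq hX hmean hcov i)]
  simp only [dotProduct, mulVec, Matrix.add_apply, vecMulVec_apply, mul_add, Finset.mul_sum]
  congr 1
  · ring
  · exact Finset.sum_congr rfl fun j _ => by ring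

end Regime

lemma integral_eq_sum_setIntegral_fiber {E σ : Type*} [NormedAddCommGroup E] [NormedSpace ℝ E]
    [Fintype σ] [MeasurableSpace σ] [MeasurableSingletonClass σ] {S : Ω → σ}
    (hS : Measurable S) {f : Ω → E} (hf : Integrable f ν) :
    ∫ ω, f ω ∂ν = ∑ s, ∫ ω in {ω | S ω = s}, f ω ∂ν := by
  have hcover : (⋃ s ∈ (Finset.univ : Finset σ), {ω | S ω = s}) = Set.univ := by
    ext ω
    simp
  rw [← setIntegral_univ, ← hcover, integral_biUnion_finset (s := fun s => {ω | S ω = s}) _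
    (fun s _ => hS (measurableSet_singleton s))
    (fun s _ t _ hst => Set.disjoint_left.2 fun ω h₁ h₂ => hst (h₁.symm.trans h₂))
    (fun s _ => hf.integrableOn)]

section Mixture

variable {σ : Type*} [MeasurableSpace σ] [MeasurableSingletonClass σ] {P : Measure Ω}
  {S : Ω → σ} {X : Ω → ι → ℝ} {p : σ → ℝ} {μ : σ → ι → ℝ}

lemma integral_coord_eq_of_mixture [Fintype σ] (hS : Measurable S)
    (hX : ∀ i, Integrable (fun ω => X ω i) P)
    (hmean : ∀ s i, ∫ ω in {ω | S ω = s}, X ω i ∂P = p s * μ s i) (i : ι) :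
    ∫ ω, X ω i ∂P = (∑ s, p s • μ s) i := by
  rw [integral_eq_sum_setIntegral_fiber hS (hX i), Finset.sum_apply]
  simp [hmean]

lemma integral_coord_mul_coord_eq_of_mixture [Fintype σ] [IsFiniteMeasure P]
    (hS : Measurable S) (hX : ∀ i, MemLp (fun ω => X ω i) 2 P)
    (hP : ∀ s, P.real {ω | S ω = s} = p s)
    (hmean : ∀ s i, ∫ ω in {ω | S ω = s}, X ω i ∂P = p s * μ s i) {Sig : σ → Matrix ι ι ℝ}
    (hcov : ∀ s i j,
      ∫ ω in {ω | S ω = s}, (X ω i - μ s i) * (X ω j - μ s j) ∂P = p s * Sig s i j)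
    (i j : ι) :
    ∫ ω, X ω i * X ω j ∂P = (∑ s, p s • (Sig s + vecMulVec (μ s) (μ s))) i j := by
  have hXX : Integrable (fun ω => X ω i * X ω j) P := (hX i).integrable_mul (hX j)
  rw [integral_eq_sum_setIntegral_fiber hS hXX, Matrix.sum_apply]
  refine Finset.sum_congr rfl fun s _ => ?_
  rw [integral_mul_eq_of_cov ((measureReal_restrict_apply_univ _).trans (hP s))
    (fun i => (hX i).restrict _) (hmean s) (hcov s)]
  simp [vecMulVec_apply]

variable {Y ε : Ω → ℝ} {α : σ → ℝ} {β : σ → ι → ℝ}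

lemma ae_restrict_fiber_of_mixture [Fintype ι] (hS : Measurable S)
    (hY : ∀ ω, Y ω = α (S ω) + β (S ω) ⬝ᵥ X ω + ε ω) (s : σ) :
    ∀ᵐ ω ∂P.restrict {ω | S ω = s}, Y ω = α s + β s ⬝ᵥ X ω + ε ω :=
  (ae_restrict_mem (hS (measurableSet_singleton s))).mono fun ω hω => by
    rw [hY ω, show S ω = s from hω]

lemma memLp_noise_of_mixture [Fintype ι] [IsFiniteMeasure P] (hS : Measurable S)
    (hX : ∀ i, MemLp (fun ω => X ω i) 2 P)
    (hY₂ : MemLp Y 2 P) (hY : ∀ ω, Y ω = α (S ω) + β (S ω) ⬝ᵥ X ω + ε ω) (s : σ) :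
    MemLp ε 2 (P.restrict {ω | S ω = s}) :=
  (hY₂.sub (memLp_const_add_dotProduct hX (α s) (β s))).restrict _ |>.ae_eq <|
    (ae_restrict_fiber_of_mixture hS hY s).mono fun ω hω => by
      simp only [Pi.sub_apply, hω]
      ring

lemma integral_response_eq_of_mixture [Fintype ι] [Fintype σ] [IsFiniteMeasure P]
    (hS : Measurable S) (hX : ∀ i, MemLp (fun ω => X ω i) 2 P) (hY₂ : MemLp Y 2 P)
    (hY : ∀ ω, Y ω = α (S ω) + β (S ω) ⬝ᵥ X ω + ε ω) (hP : ∀ s, P.real {ω | S ω = s} = p s)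
    (hmean : ∀ s i, ∫ ω in {ω | S ω = s}, X ω i ∂P = p s * μ s i)
    (hε : ∀ s, ∫ ω in {ω | S ω = s}, ε ω ∂P = 0) :
    ∫ ω, Y ω ∂P = ∑ s, p s * (α s + β s ⬝ᵥ μ s) := by
  rw [integral_eq_sum_setIntegral_fiber hS (hY₂.integrable one_le_two)]
  exact Finset.sum_congr rfl fun s _ =>
    integral_eq_of_linear_model ((measureReal_restrict_apply_univ _).trans (hP s))
      (fun i => ((hX i).integrable one_le_two).restrict)
      ((memLp_noise_of_mixture hS hX hY₂ hY s).integrable one_le_two)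
      (ae_restrict_fiber_of_mixture hS hY s) (hmean s) (hε s)

lemma integral_coord_mul_response_eq_of_mixture [Fintype ι] [Fintype σ] [IsFiniteMeasure P]
    (hS : Measurable S) (hX : ∀ i, MemLp (fun ω => X ω i) 2 P) (hY₂ : MemLp Y 2 P)
    (hY : ∀ ω, Y ω = α (S ω) + β (S ω) ⬝ᵥ X ω + ε ω) (hP : ∀ s, P.real {ω | S ω = s} = p s)
    (hmean : ∀ s i, ∫ ω in {ω | S ω = s}, X ω i ∂P = p s * μ s i) {Sig : σ → Matrix ι ι ℝ}
    (hcov : ∀ s i j,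
      ∫ ω in {ω | S ω = s}, (X ω i - μ s i) * (X ω j - μ s j) ∂P = p s * Sig s i j)
    (hε : ∀ s, ∫ ω in {ω | S ω = s}, ε ω ∂P = 0)
    (hXε : ∀ s i, ∫ ω in {ω | S ω = s}, (X ω i - μ s i) * ε ω ∂P = 0) (i : ι) :
    ∫ ω, X ω i * Y ω ∂P
      = (∑ s, p s • (α s • μ s + (Sig s + vecMulVec (μ s) (μ s)) *ᵥ β s)) i := by
  have hXY : Integrable (fun ω => X ω i * Y ω) P := (hX i).integrable_mul hY₂
  rw [integral_eq_sum_setIntegral_fiber hS hXY, Finset.sum_apply]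
  refine Finset.sum_congr rfl fun s _ => ?_
  rw [integral_mul_eq_of_linear_model ((measureReal_restrict_apply_univ _).trans (hP s))
    (fun i => (hX i).restrict _) (memLp_noise_of_mixture hS hX hY₂ hY s)
    (ae_restrict_fiber_of_mixture hS hY s) (hmean s) (hcov s) (hε s) (hXε s)]
  simp

end Mixture
end MeasureTheory

namespace Matrix
variable {R ι σ : Type*} [CommRing R] [Fintype σ]

lemma sum_smul_sub_vecMulVec_sum_smul (p : σ → R) (μ : σ → ι → R) (A : σ → Matrix ι ι R) :
    (∑ s, p s • A s) - vecMulVec (∑ s, p s • μ s) (∑ s, p s • μ s)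
      = ∑ s, p s • (A s - vecMulVec (∑ t, p t • μ t) (μ s)) := by
  ext i j
  simp only [sub_apply, Matrix.sum_apply, smul_apply, vecMulVec_apply, Finset.sum_apply,
    Pi.smul_apply, smul_eq_mul, mul_sub, Finset.sum_sub_distrib]
  rw [Finset.mul_sum]
  exact congrArg _ (Finset.sum_congr rfl fun s _ => by ring)

lemma sum_smul_sub_sum_mul_smul [Fintype ι] (p α : σ → R) (μ β : σ → ι → R)
    (A : σ → Matrix ι ι R) (m : ι → R) :
    (∑ s, p s • (α s • μ s + A s *ᵥ β s)) - (∑ s, p s * (α s + β s ⬝ᵥ μ s)) • m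
      = ∑ s, (p s * α s) • (μ s - m) + ∑ s, p s • ((A s - vecMulVec m (μ s)) *ᵥ β s) := by
  ext i
  simp only [Pi.sub_apply, Pi.add_apply, Finset.sum_apply, Pi.smul_apply, smul_eq_mul,
    sub_mulVec, vecMulVec_mulVec, op_smul_eq_mul, Finset.sum_mul, ← Finset.sum_add_distrib,
    ← Finset.sum_sub_distrib]
  exact Finset.sum_congr rfl fun s _ => by rw [dotProduct_comm]; ring

end Matrix

theorem stmt0_general
    {Ω : Type*} [MeasurableSpace Ω] (P : Measure Ω) [IsProbabilityMeasure P]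
    (n d : ℕ) (S : Ω → Fin (n + 1)) (hS : Measurable S)
    (X : Ω → Fin d → ℝ) (Y : Ω → ℝ) (ε : Ω → ℝ)
    (p : Fin (n + 1) → ℝ) (μv : Fin (n + 1) → Fin d → ℝ)
    (Sig : Fin (n + 1) → Matrix (Fin d) (Fin d) ℝ)
    (αb : Fin (n + 1) → ℝ) (βb : Fin (n + 1) → Fin d → ℝ)
    (hp : ∀ s, 0 < p s)
    (hmeas : ∀ s, P {ω | S ω = s} = ENNReal.ofReal (p s))
    (hmean : ∀ s i, ∫ ω in {ω | S ω = s}, X ω i ∂P = p s * μv s i)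
    (hcovX : ∀ s i j,
      ∫ ω in {ω | S ω = s}, (X ω i - μv s i) * (X ω j - μv s j) ∂P = p s * Sig s i j)
    (hY : ∀ ω, Y ω = αb (S ω) + βb (S ω) ⬝ᵥ X ω + ε ω)
    (hε : ∀ s, ∫ ω in {ω | S ω = s}, ε ω ∂P = 0)
    (hXε : ∀ s i, ∫ ω in {ω | S ω = s}, (X ω i - μv s i) * ε ω ∂P = 0)
    (hint : ∀ (a : ℝ) (b : Fin d → ℝ),
      Integrable (fun ω => (a + b ⬝ᵥ X ω - Y ω) ^ 2) P)
    (μbar : Fin d → ℝ) (hμbar : μbar = ∑ s, p s • μv s)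
    (W : Fin (n + 1) → Matrix (Fin d) (Fin d) ℝ)
    (hW : ∀ s, W s = Sig s + Matrix.of (fun i j => μv s i * μv s j)
        - Matrix.of (fun i j => μbar i * μv s j))
    (hEW : IsUnit (∑ s, p s • W s).det)
    (covαμ : Fin d → ℝ) (hcovαμ : covαμ = ∑ s, (p s * αb s) • (μv s - μbar))
    (βPool : Fin d → ℝ)
    (hβPool : βPool = (∑ s, p s • W s)⁻¹ *ᵥ (covαμ + ∑ s, p s • (W s *ᵥ βb s)))
    (αPool : ℝ) (hαPool : αPool = (∫ ω, Y ω ∂P) - βPool ⬝ᵥ μbar) :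
    ∀ (a : ℝ) (b : Fin d → ℝ),
      ∫ ω, (αPool + βPool ⬝ᵥ X ω - Y ω) ^ 2 ∂P ≤ ∫ ω, (a + b ⬝ᵥ X ω - Y ω) ^ 2 ∂P := by
  have hX := memLp_two_coord_of_integrable_sq hint
  have hY₂ := memLp_two_response_of_integrable_sq hint
  have hP : ∀ s, P.real {ω | S ω = s} = p s := fun s => by
    rw [measureReal_def, hmeas, ENNReal.toReal_ofReal (hp s).le]
  have hW' : W = fun s => Sig s + vecMulVec (μv s) (μv s) - vecMulVec μbar (μv s) := funext hW
  subst hW' hcovαμ hμbar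
  refine integral_sq_residual_le_of_moment_equations hint
    (integral_coord_eq_of_mixture hS (fun i => (hX i).integrable one_le_two) hmean)
    (integral_coord_mul_coord_eq_of_mixture hS hX hP hmean hcovX)
    (integral_coord_mul_response_eq_of_mixture hS hX hY₂ hY hP hmean hcovX hε hXε) rfl hαPool ?_
  rw [integral_response_eq_of_mixture hS hX hY₂ hY hP hmean hε, sum_smul_sub_vecMulVec_sum_smul,
    sum_smul_sub_sum_mul_smul, hβPool, mulVec_mulVec, mul_nonsing_inv _ hEW, one_mulVec]

/-- The pooled coefficients `(α_Pool, β_Pool)` minimize the mean squared forecast error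
`E[(α + βᵀX_S − Y_S)²]` in the mixture model. -/
theorem stmt0
    {Ω : Type*} [MeasurableSpace Ω] (P : Measure Ω) [IsProbabilityMeasure P]
    (n d : ℕ) (S : Ω → Fin (n + 1)) (hS : Measurable S)
    (X : Ω → Fin d → ℝ) (Y : Ω → ℝ) (ε : Ω → ℝ)
    (p : Fin (n + 1) → ℝ) (μv : Fin (n + 1) → Fin d → ℝ)
    (Sig : Fin (n + 1) → Matrix (Fin d) (Fin d) ℝ)
    (αb : Fin (n + 1) → ℝ) (βb : Fin (n + 1) → Fin d → ℝ)
    (hp : ∀ s, 0 < p s)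
    (hmeas : ∀ s, P {ω | S ω = s} = ENNReal.ofReal (p s))
    (hmean : ∀ s i, ∫ ω in {ω | S ω = s}, X ω i ∂P = p s * μv s i)
    (hcovX : ∀ s i j,
      ∫ ω in {ω | S ω = s}, (X ω i - μv s i) * (X ω j - μv s j) ∂P = p s * Sig s i j)
    (hSigInv : ∀ s, IsUnit (Sig s).det)
    (hY : ∀ ω, Y ω = αb (S ω) + βb (S ω) ⬝ᵥ X ω + ε ω)
    (hε : ∀ s, ∫ ω in {ω | S ω = s}, ε ω ∂P = 0)
    (hXε : ∀ s i, ∫ ω in {ω | S ω = s}, (X ω i - μv s i) * ε ω ∂P = 0)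
    (hint : ∀ (a : ℝ) (b : Fin d → ℝ),
      Integrable (fun ω => (a + b ⬝ᵥ X ω - Y ω) ^ 2) P)
    (μbar : Fin d → ℝ) (hμbar : μbar = ∑ s, p s • μv s)
    (W : Fin (n + 1) → Matrix (Fin d) (Fin d) ℝ)
    (hW : ∀ s, W s = Sig s + Matrix.of (fun i j => μv s i * μv s j)
        - Matrix.of (fun i j => μbar i * μv s j))
    (hEW : IsUnit (∑ s, p s • W s).det)
    (covαμ : Fin d → ℝ) (hcovαμ : covαμ = ∑ s, (p s * αb s) • (μv s - μbar))
    (βPool : Fin d → ℝ)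
    (hβPool : βPool = (∑ s, p s • W s)⁻¹ *ᵥ (covαμ + ∑ s, p s • (W s *ᵥ βb s)))
    (αPool : ℝ) (hαPool : αPool = (∫ ω, Y ω ∂P) - βPool ⬝ᵥ μbar) :
    ∀ (a : ℝ) (b : Fin d → ℝ),
      ∫ ω, (αPool + βPool ⬝ᵥ X ω - Y ω) ^ 2 ∂P ≤ ∫ ω, (a + b ⬝ᵥ X ω - Y ω) ^ 2 ∂P :=
  stmt0_general P n d S hS X Y ε p μv Sig αb βb hp hmeas hmean hcovX hY hε hXε hint μbar hμbar W hW
    hEW covαμ hcovαμ βPool hβPool αPool hαPool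
end

section
/- If cov[α_S, μ_S] = 0 and σ_s² + μ_s² − μ̄μ_s ≥ 0 for all s (scalar features, d = 1), then the pooled coefficient β_Pool = (Σ_s p_s(σ_s² + μ_s² − μ̄μ_s)β_s)/(Σ_s p_s(σ_s² + μ_s² − μ̄μ_s)) is a convex combination of the bank-specific coefficients β_1,…,β_S̄; in particular min_s β_s ≤ β_Pool ≤ max_s β_s. -/
open Finset

/-- In the scalar case, if `cov[α_S, μ_S] = 0` and the weights `σ_s² + μ_s² − μ̄μ_s` are
nonnegative, the pooled coefficient is a convex combination of the bank-specific
coefficients; in particular it lies between their minimum and maximum. -/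
theorem stmt1
    (n : ℕ) (p α β μ σ2 : Fin (n + 1) → ℝ)
    (hp : ∀ s, 0 < p s) (hpsum : ∑ s, p s = 1)
    (hσ : ∀ s, 0 < σ2 s)
    (μbar : ℝ) (hμbar : μbar = ∑ s, p s * μ s)
    (hcov : ∑ s, p s * α s * (μ s - μbar) = 0)
    (hnn : ∀ s, 0 ≤ σ2 s + μ s ^ 2 - μbar * μ s)
    (βPool : ℝ)
    (hβPool : βPool = (∑ s, p s * (σ2 s + μ s ^ 2 - μbar * μ s) * β s)
        / (∑ s, p s * (σ2 s + μ s ^ 2 - μbar * μ s))) :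
    (∃ w : Fin (n + 1) → ℝ, (∀ s, 0 ≤ w s) ∧ (∑ s, w s = 1) ∧ βPool = ∑ s, w s * β s)
    ∧ (⨅ s, β s) ≤ βPool ∧ βPool ≤ (⨆ s, β s) := by
  set D : ℝ := ∑ s, p s * (σ2 s + μ s ^ 2 - μbar * μ s) with hD
  -- D = ∑ p σ2 + ∑ p (μ - μbar)^2 > 0
  have hDeq : D = (∑ s, p s * σ2 s) + ∑ s, p s * (μ s - μbar) ^ 2 := by
    have e1 : ∑ s, p s * (μ s - μbar) ^ 2
        = ∑ s, (p s * (μ s ^ 2 - μbar * μ s) - p s * μbar * μ s + p s * μbar ^ 2) :=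
      Finset.sum_congr rfl fun s _ => by ring
    rw [e1, Finset.sum_add_distrib, Finset.sum_sub_distrib]
    have h1 : ∑ s, p s * μbar * μ s = μbar * ∑ s, p s * μ s := by
      rw [Finset.mul_sum]; exact Finset.sum_congr rfl fun s _ => by ring
    have h2 : ∑ s, p s * μbar ^ 2 = μbar ^ 2 := by
      rw [← Finset.sum_mul, hpsum, one_mul]
    have h3 : D = ∑ s, p s * σ2 s + ∑ s, p s * (μ s ^ 2 - μbar * μ s) := by
      rw [hD, ← Finset.sum_add_distrib]
      exact Finset.sum_congr rfl fun s _ => by ring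
    rw [h1, ← hμbar, h2, h3]
    ring
  have hDpos : 0 < D := by
    rw [hDeq]
    have h1 : 0 < ∑ s, p s * σ2 s :=
      Finset.sum_pos (fun s _ => mul_pos (hp s) (hσ s)) Finset.univ_nonempty
    have h2 : 0 ≤ ∑ s, p s * (μ s - μbar) ^ 2 :=
      Finset.sum_nonneg fun s _ => mul_nonneg (hp s).le (sq_nonneg _)
    linarith
  set w : Fin (n + 1) → ℝ := fun s => p s * (σ2 s + μ s ^ 2 - μbar * μ s) / D with hw
  have hwnn : ∀ s, 0 ≤ w s := fun s =>
    div_nonneg (mul_nonneg (hp s).le (hnn s)) hDpos.le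
  have hwsum : ∑ s, w s = 1 := by
    rw [hw]
    rw [← Finset.sum_div, ← hD, div_self hDpos.ne']
  have hβw : βPool = ∑ s, w s * β s := by
    rw [hβPool, Finset.sum_div]
    exact Finset.sum_congr rfl fun s _ => by rw [hw]; ring
  refine ⟨⟨w, hwnn, hwsum, hβw⟩, ?_, ?_⟩
  · have hbdd : BddBelow (Set.range β) := Set.finite_range β |>.bddBelow
    calc (⨅ s, β s) = ∑ s, w s * (⨅ t, β t) := by
          rw [← Finset.sum_mul, hwsum, one_mul]
      _ ≤ ∑ s, w s * β s :=
          Finset.sum_le_sum fun s _ => mul_le_mul_of_nonneg_left (ciInf_le hbdd s) (hwnn s)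
      _ = βPool := hβw.symm
  · have hbdd : BddAbove (Set.range β) := Set.finite_range β |>.bddAbove
    calc βPool = ∑ s, w s * β s := hβw
      _ ≤ ∑ s, w s * (⨆ t, β t) :=
          Finset.sum_le_sum fun s _ => mul_le_mul_of_nonneg_left (le_ciSup hbdd s) (hwnn s)
      _ = (⨆ s, β s) := by rw [← Finset.sum_mul, hwsum, one_mul]
end

section
/- If each X_s ~ N(μ_s, Σ_s) with ‖β_s‖ ≠ 0 and the distribution-function identities F_s(y) = Φ((y − α_s°)/‖β_s°‖) hold, then the forecast Ŷ°(x,s) = Σ_i p_i F_i⁻¹(F_s(α_s + β_sᵀx)) satisfies demographic parity: the distribution of Ŷ°(X_s, s) is the same for all s. -/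
/-!
Each score `α_s + β_sᵀX_s` is Gaussian with mean `α_s°` and standard deviation `‖β_s°‖`, so its
standardization `Z_s` is standard normal, and `F_s` is the normal CDF evaluated at `Z_s`. Because every
`F_i` comes from the same standard CDF by an affine change of variable, `F_i⁻¹ ∘ F_s` is affine:
`F_i⁻¹(F_s(y)) = α_i° + ‖β_i°‖ Z_s`. Hence `Ŷ°(X_s, s) = Σ p_i α_i° + (Σ p_i ‖β_i°‖) Z_s`, an affine
image of a standard normal variable whose coefficients do not depend on `s`.
-/

open MeasureTheory ProbabilityTheory Finset NNReal

lemma gaussianReal_map_standardize (m : ℝ) {σ : ℝ≥0} (hσ : σ ≠ 0) :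
    (gaussianReal m (σ ^ 2)).map (fun y => (y - m) / σ) = gaussianReal 0 1 := by
  have hcomp : (fun y : ℝ => (y - m) / σ) = (· / (σ : ℝ)) ∘ (· - m) := rfl
  rw [hcomp, ← Measure.map_map (by fun_prop) (by fun_prop), gaussianReal_map_sub_const,
    gaussianReal_map_div_const, sub_self, zero_div]
  congr 1
  ext
  simp [hσ]

lemma map_standardize_of_map_eq_gaussianReal {Ω : Type*} [MeasurableSpace Ω] {P : Measure Ω}
    {Y : Ω → ℝ} {m : ℝ} {σ : ℝ≥0} (hY : P.map Y = gaussianReal m (σ ^ 2)) (hσ : σ ≠ 0) :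
    P.map (fun ω => (Y ω - m) / σ) = gaussianReal 0 1 := by
  have hYm : AEMeasurable Y P := .of_map_ne_zero (by rw [hY]; exact IsProbabilityMeasure.ne_zero _)
  rw [← gaussianReal_map_standardize m hσ, ← hY,
    AEMeasurable.map_map_of_aemeasurable (by fun_prop) hYm]
  rfl

lemma map_comp_of_map_eq_gaussianReal {Ω : Type*} [MeasurableSpace Ω] {P : Measure Ω}
    {Z : Ω → ℝ} {m : ℝ} {v : ℝ≥0} (hZ : P.map Z = gaussianReal m v) {g : ℝ → ℝ}
    (hg : Measurable g) : P.map (g ∘ Z) = (gaussianReal m v).map g := by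
  have hZm : AEMeasurable Z P := .of_map_ne_zero (by rw [hZ]; exact IsProbabilityMeasure.ne_zero _)
  rw [← hZ, AEMeasurable.map_map_of_aemeasurable hg.aemeasurable hZm]

lemma leftInverse_apply_of_eq_comp_affine {F Finv G : ℝ → ℝ} {a b : ℝ} (hb : b ≠ 0)
    (hF : ∀ y, F y = G ((y - a) / b)) (hFinv : ∀ y, Finv (F y) = y) (z : ℝ) :
    Finv (G z) = a + b * z := by
  rw [← hFinv (a + b * z), hF, add_sub_cancel_left, mul_div_cancel_left₀ _ hb]

lemma sum_mul_leftInverse_apply_eq_affine {ι : Type*} [Fintype ι] {F Finv : ι → ℝ → ℝ}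
    {G : ℝ → ℝ} {a b p : ι → ℝ} (hb : ∀ i, b i ≠ 0) (hF : ∀ i y, F i y = G ((y - a i) / b i))
    (hFinv : ∀ i y, Finv i (F i y) = y) (s : ι) (y : ℝ) :
    ∑ i, p i * Finv i (F s y) = ∑ i, p i * a i + (∑ i, p i * b i) * ((y - a s) / b s) := by
  simp only [hF s, leftInverse_apply_of_eq_comp_affine (hb _) (hF _) (hFinv _), mul_add,
    sum_add_distrib, sum_mul, mul_assoc]

theorem stmt10_general
    {Ω : Type*} [MeasurableSpace Ω] (P : Measure Ω)
    (n d : ℕ) (p : Fin (n + 1) → ℝ)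
    -- bank-specific feature vectors
    (X : Fin (n + 1) → Ω → EuclideanSpace ℝ (Fin d))
    (αb : Fin (n + 1) → ℝ) (βb : Fin (n + 1) → EuclideanSpace ℝ (Fin d))
    (αo : Fin (n + 1) → ℝ)
    (βo : Fin (n + 1) → EuclideanSpace ℝ (Fin d)) (hβo : ∀ s, ‖βo s‖ ≠ 0)
    -- normality: α_s + β_sᵀX_s ~ N(α_s°, ‖β_s°‖²)
    (hnormal : ∀ s, Measure.map (fun ω => αb s + (inner ℝ (βb s) (X s ω) : ℝ)) P
      = gaussianReal (αo s) (‖βo s‖₊ ^ 2))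
    -- distribution-function identities F_s(y) = Φ((y − α_s°)/‖β_s°‖)
    (F : Fin (n + 1) → ℝ → ℝ)
    (hF : ∀ s y, F s y = cdf (gaussianReal 0 1) ((y - αo s) / ‖βo s‖))
    -- F_i⁻¹ : a left inverse of F_i
    (Finv : Fin (n + 1) → ℝ → ℝ)
    (hFinv : ∀ i y, Finv i (F i y) = y)
    -- the projection-to-fairness forecast
    (Yhat : EuclideanSpace ℝ (Fin d) → Fin (n + 1) → ℝ)
    (hYhat : ∀ x s, Yhat x s = ∑ i, p i * Finv i (F s (αb s + (inner ℝ (βb s) x : ℝ)))) :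
    ∀ s t : Fin (n + 1),
      Measure.map (fun ω => Yhat (X s ω) s) P = Measure.map (fun ω => Yhat (X t ω) t) P := by
  set A := ∑ i, p i * αo i
  set B := ∑ i, p i * ‖βo i‖
  suffices h : ∀ s, Measure.map (fun ω => Yhat (X s ω) s) P
      = (gaussianReal 0 1).map (fun z => A + B * z) from fun s t => by rw [h s, h t]
  intro s
  have hZ := map_standardize_of_map_eq_gaussianReal (hnormal s) (nnnorm_ne_zero_iff.2
    (norm_ne_zero_iff.1 (hβo s)))
  rw [← map_comp_of_map_eq_gaussianReal hZ (by fun_prop)]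
  congr 1
  ext ω
  simp [hYhat, sum_mul_leftInverse_apply_eq_affine hβo hF hFinv, A, B]

/-- Under normality of each bank's features, the projection-to-fairness forecast
`Ŷ°(x,s) = Σ_i p_i F_i⁻¹(F_s(α_s + β_sᵀx))` satisfies demographic parity: the distribution
of `Ŷ°(X_s, s)` is the same for all banks `s`. -/
theorem stmt10
    {Ω : Type*} [MeasurableSpace Ω] (P : Measure Ω) [IsProbabilityMeasure P]
    (n d : ℕ) (p : Fin (n + 1) → ℝ) (hp : ∀ s, 0 < p s) (hpsum : ∑ s, p s = 1)
    -- bank-specific feature vectors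
    (X : Fin (n + 1) → Ω → EuclideanSpace ℝ (Fin d))
    (hX : ∀ s, Measurable (X s))
    (αb : Fin (n + 1) → ℝ) (βb μv : Fin (n + 1) → EuclideanSpace ℝ (Fin d))
    (hβ : ∀ s, ‖βb s‖ ≠ 0)
    (αo : Fin (n + 1) → ℝ) (hαo : ∀ s, αo s = αb s + (inner ℝ (βb s) (μv s) : ℝ))
    (βo : Fin (n + 1) → EuclideanSpace ℝ (Fin d)) (hβo : ∀ s, ‖βo s‖ ≠ 0)
    -- normality: α_s + β_sᵀX_s ~ N(α_s°, ‖β_s°‖²)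
    (hnormal : ∀ s, Measure.map (fun ω => αb s + (inner ℝ (βb s) (X s ω) : ℝ)) P
      = gaussianReal (αo s) (‖βo s‖₊ ^ 2))
    -- distribution-function identities F_s(y) = Φ((y − α_s°)/‖β_s°‖)
    (F : Fin (n + 1) → ℝ → ℝ)
    (hF : ∀ s y, F s y = cdf (gaussianReal 0 1) ((y - αo s) / ‖βo s‖))
    -- F_i⁻¹ : a left inverse of F_i
    (Finv : Fin (n + 1) → ℝ → ℝ)
    (hFinv : ∀ i y, Finv i (F i y) = y)
    -- the projection-to-fairness forecast
    (Yhat : EuclideanSpace ℝ (Fin d) → Fin (n + 1) → ℝ)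
    (hYhat : ∀ x s, Yhat x s = ∑ i, p i * Finv i (F s (αb s + (inner ℝ (βb s) x : ℝ)))) :
    ∀ s t : Fin (n + 1),
      Measure.map (fun ω => Yhat (X s ω) s) P = Measure.map (fun ω => Yhat (X t ω) t) P :=
  stmt10_general P n d p X αb βb αo βo hβo hnormal F hF Finv hFinv Yhat hYhat
end

section
/- If all covariance matrices Σ_s equal a common Σ and the standardized variables Z_s = Σ^{−1/2}(X_s − μ_s) have the same distribution for all s, then the SEO forecast Ŷ_SEO(x,s) = α_F + β_Fᵀ(x − μ_s + μ̄) coincides with the averaged standardized forecast ᾱ° + β̄°ᵀ z_s where ᾱ° = Σ_i p_i α_i°, β̄° = Σ_i p_i β_i°, z_s = Σ^{−1/2}(x − μ_s); and the forecast satisfies demographic parity. -/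
/-!
With a common covariance `Σ = R²`, standardizing bank `s` by `z = R⁻¹(x - μ_s)` turns each
bank's coefficient `β_s` into `R β_s`, and since `R` is symmetric `⟪R β, R⁻¹ v⟫ = ⟪β, v⟫`;
averaging the standardized coefficients therefore recovers the pooled coefficient `β_F`, and
the intercepts match because `α_F + ⟪β_F, μ̄⟫ = E[Y_S] = Σ_s p_s α_s°`. The SEO forecast of
bank `s` is a fixed measurable function of `Z_s`, so identically distributed standardized
variables give identically distributed forecasts.
-/

open MeasureTheory Finset

section SymmetricStandardization

variable {E : Type*} [NormedAddCommGroup E] [InnerProductSpace ℝ E]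

lemma inner_apply_symm_apply_of_symmetric (R : E ≃ₗ[ℝ] E)
    (hR : ∀ v w : E, (inner ℝ (R v) w : ℝ) = inner ℝ v (R w)) (b v : E) :
    (inner ℝ (R b) (R.symm v) : ℝ) = inner ℝ b v := by
  rw [hR, R.apply_symm_apply]

lemma inner_sum_smul_apply_symm_of_symmetric {ι : Type*} (R : E ≃ₗ[ℝ] E)
    (hR : ∀ v w : E, (inner ℝ (R v) w : ℝ) = inner ℝ v (R w))
    (s : Finset ι) (p : ι → ℝ) (β : ι → E) (v : E) :
    (inner ℝ (∑ i ∈ s, p i • R (β i)) (R.symm v) : ℝ) = inner ℝ (∑ i ∈ s, p i • β i) v := by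
  simp only [sum_inner, real_inner_smul_left, inner_apply_symm_apply_of_symmetric R hR]

end SymmetricStandardization

lemma map_comp_eq_of_map_eq {Ω α β : Type*} [MeasurableSpace Ω] [MeasurableSpace α]
    [MeasurableSpace β] {P : Measure Ω} {Z₁ Z₂ : Ω → α} (hZ₁ : Measurable Z₁)
    (hZ₂ : Measurable Z₂) (hZ : P.map Z₁ = P.map Z₂) {g : α → β} (hg : Measurable g) :
    P.map (g ∘ Z₁) = P.map (g ∘ Z₂) := by
  rw [← Measure.map_map hg hZ₁, ← Measure.map_map hg hZ₂, hZ]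

theorem stmt11_general
    {Ω : Type*} [MeasurableSpace Ω] (P : Measure Ω)
    (n d : ℕ) (p : Fin (n + 1) → ℝ)
    (X : Fin (n + 1) → Ω → EuclideanSpace ℝ (Fin d)) (hX : ∀ s, Measurable (X s))
    (αb : Fin (n + 1) → ℝ) (βb μv : Fin (n + 1) → EuclideanSpace ℝ (Fin d))
    -- `R` is the symmetric square root `Σ^{1/2}` of the common covariance matrix `Σ`
    (R : EuclideanSpace ℝ (Fin d) ≃ₗ[ℝ] EuclideanSpace ℝ (Fin d))
    (hRsym : ∀ v w : EuclideanSpace ℝ (Fin d), (inner ℝ (R v) w : ℝ) = inner ℝ v (R w))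
    -- standardized variables, identically distributed across banks
    (Z : Fin (n + 1) → Ω → EuclideanSpace ℝ (Fin d))
    (hZ : ∀ s ω, Z s ω = R.symm (X s ω - μv s))
    (hZdist : ∀ s t, Measure.map (Z s) P = Measure.map (Z t) P)
    -- standardized coefficients
    (αo : Fin (n + 1) → ℝ) (hαo : ∀ s, αo s = αb s + (inner ℝ (βb s) (μv s) : ℝ))
    (βo : Fin (n + 1) → EuclideanSpace ℝ (Fin d)) (hβo : ∀ s, βo s = R (βb s))
    (μbar : EuclideanSpace ℝ (Fin d))
    -- FEO coefficient and intercept (with common Σ, β_F = Σ_s p_s β_s)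
    (βF : EuclideanSpace ℝ (Fin d)) (hβF : βF = ∑ s, p s • βb s)
    (EY : ℝ) (hEY : EY = ∑ s, p s * (αb s + (inner ℝ (βb s) (μv s) : ℝ)))
    (αF : ℝ) (hαF : αF = EY - (inner ℝ βF μbar : ℝ)) :
    -- the SEO forecast coincides with the averaged standardized forecast
    (∀ (s : Fin (n + 1)) (x : EuclideanSpace ℝ (Fin d)),
      αF + (inner ℝ βF (x - μv s + μbar) : ℝ)
        = (∑ i, p i * αo i) + (inner ℝ (∑ i, p i • βo i) (R.symm (x - μv s)) : ℝ)) ∧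
    -- demographic parity: the forecast has the same distribution for all banks
    (∀ s t : Fin (n + 1),
      Measure.map (fun ω => αF + (inner ℝ βF (X s ω - μv s + μbar) : ℝ)) P
        = Measure.map (fun ω => αF + (inner ℝ βF (X t ω - μv t + μbar) : ℝ)) P) := by
  have hR : Continuous R := LinearMap.continuous_of_finiteDimensional R.toLinearMap
  have hRsymm : Continuous R.symm := LinearMap.continuous_of_finiteDimensional R.symm.toLinearMap
  refine ⟨fun s x => ?_, fun s t => ?_⟩
  · have hαo_avg : ∑ i, p i * αo i = EY := by simp only [hEY, hαo]
    simp only [hβo, inner_sum_smul_apply_symm_of_symmetric R hRsym, ← hβF, hαo_avg, hαF,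
      inner_add_right]
    ring
  · have hZ_meas : ∀ s, Measurable (Z s) := fun s => by
      rw [show Z s = _ from funext (hZ s)]
      exact hRsymm.measurable.comp ((hX s).sub_const (μv s))
    have hforecast : ∀ s, (fun ω => αF + (inner ℝ βF (X s ω - μv s + μbar) : ℝ))
        = (fun z => αF + (inner ℝ βF (R z + μbar) : ℝ)) ∘ Z s := fun s => by
      ext ω; simp only [Function.comp_apply, hZ, R.apply_symm_apply]
    rw [hforecast s, hforecast t]
    exact map_comp_eq_of_map_eq (hZ_meas s) (hZ_meas t) (hZdist s t)
      (continuous_const.add (continuous_const.inner (hR.add continuous_const))).measurable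

/-- If all covariance matrices equal a common `Σ` and the standardized variables
`Z_s = Σ^{−1/2}(X_s − μ_s)` are identically distributed across banks, then the SEO forecast
`α_F + β_Fᵀ(x − μ_s + μ̄)` coincides with the averaged standardized forecast
`ᾱ° + β̄°ᵀ z_s`, and the forecast satisfies demographic parity. -/
theorem stmt11
    {Ω : Type*} [MeasurableSpace Ω] (P : Measure Ω) [IsProbabilityMeasure P]
    (n d : ℕ) (p : Fin (n + 1) → ℝ) (hp : ∀ s, 0 < p s) (hpsum : ∑ s, p s = 1)
    (X : Fin (n + 1) → Ω → EuclideanSpace ℝ (Fin d)) (hX : ∀ s, Measurable (X s))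
    (αb : Fin (n + 1) → ℝ) (βb μv : Fin (n + 1) → EuclideanSpace ℝ (Fin d))
    -- `R` is the symmetric square root `Σ^{1/2}` of the common covariance matrix `Σ`
    (R : EuclideanSpace ℝ (Fin d) ≃ₗ[ℝ] EuclideanSpace ℝ (Fin d))
    (hRsym : ∀ v w : EuclideanSpace ℝ (Fin d), (inner ℝ (R v) w : ℝ) = inner ℝ v (R w))
    -- standardized variables, identically distributed across banks
    (Z : Fin (n + 1) → Ω → EuclideanSpace ℝ (Fin d))
    (hZ : ∀ s ω, Z s ω = R.symm (X s ω - μv s))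
    (hZdist : ∀ s t, Measure.map (Z s) P = Measure.map (Z t) P)
    -- standardized coefficients
    (αo : Fin (n + 1) → ℝ) (hαo : ∀ s, αo s = αb s + (inner ℝ (βb s) (μv s) : ℝ))
    (βo : Fin (n + 1) → EuclideanSpace ℝ (Fin d)) (hβo : ∀ s, βo s = R (βb s))
    (μbar : EuclideanSpace ℝ (Fin d)) (hμbar : μbar = ∑ s, p s • μv s)
    -- FEO coefficient and intercept (with common Σ, β_F = Σ_s p_s β_s)
    (βF : EuclideanSpace ℝ (Fin d)) (hβF : βF = ∑ s, p s • βb s)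
    (EY : ℝ) (hEY : EY = ∑ s, p s * (αb s + (inner ℝ (βb s) (μv s) : ℝ)))
    (αF : ℝ) (hαF : αF = EY - (inner ℝ βF μbar : ℝ)) :
    -- the SEO forecast coincides with the averaged standardized forecast
    (∀ (s : Fin (n + 1)) (x : EuclideanSpace ℝ (Fin d)),
      αF + (inner ℝ βF (x - μv s + μbar) : ℝ)
        = (∑ i, p i * αo i) + (inner ℝ (∑ i, p i • βo i) (R.symm (x - μv s)) : ℝ)) ∧
    -- demographic parity: the forecast has the same distribution for all banks
    (∀ s t : Fin (n + 1),
      Measure.map (fun ω => αF + (inner ℝ βF (X s ω - μv s + μbar) : ℝ)) P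
        = Measure.map (fun ω => αF + (inner ℝ βF (X t ω - μv t + μbar) : ℝ)) P) :=
  stmt11_general P n d p X hX αb βb μv R hRsym Z hZ hZdist αo hαo βo hβo μbar βF hβF EY hEY αF hαF
end
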